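/- arXiv:1103.0131 — 2 statements merged into one kernel-verified Lean document; each statement's English description precedes it below -/
import Mathlib

section
/- Let d ≥ 1. There exists a constant C_d > 0, depending only on d, such that for every continuously differentiable function f : ℝ^d → ℝ and all x, y ∈ ℝ^d, |f(x) − f(y)| ≤ C_d (ℳ|∇f|(x) + ℳ|∇f|(y)) |x − y|, where the inequality is understood in [0,∞] (the right-hand side may be infinite). -/
/-!
Take `r = |x - y|` and average the triangle inequality `|f x - f y| ≤ |f z - f x| + |f z - f y|`
over `z ∈ B(x, r) ⊆ B(y, 2r)`. Writing `f z - f p` as the integral of `∇f` along the segment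
from `p` to `z` and swapping the two integrals, each average becomes an integral over `t ∈ (0, 1]`
of the average of `|∇f|` over the homothetic image of `B(x, r)` with centre `p` and ratio `t`.
That image lies in `B(p, 2tr)`, whose volume is `(2t)ᵈ |B(x, r)|`; the factor `t⁻ᵈ` of the
change of variables cancels `tᵈ`, leaving `2ᵈ⁺¹ r ℳ|∇f|(p)` uniformly in `t`.
-/

open MeasureTheory Metric Set
open scoped ENNReal

/-- The Hardy–Littlewood maximal function of an `ℝ≥0∞`-valued function `g` on `ℝ^d`:
`ℳ g (x) = ⨆_{r > 0} (1/|B_r|) ∫_{B_r} g(x+y) dy`, with values in `[0,∞]`. -/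
noncomputable def maximalFn {d : ℕ} (g : EuclideanSpace ℝ (Fin d) → ℝ≥0∞)
    (x : EuclideanSpace ℝ (Fin d)) : ℝ≥0∞ :=
  ⨆ (r : ℝ) (_ : 0 < r),
    (∫⁻ y in ball (0 : EuclideanSpace ℝ (Fin d)) r, g (x + y)) /
      volume (ball (0 : EuclideanSpace ℝ (Fin d)) r)

section Segment

variable {E F : Type*} [NormedAddCommGroup E] [NormedSpace ℝ E]
  [NormedAddCommGroup F] [NormedSpace ℝ F] [CompleteSpace F]

theorem sub_eq_integral_fderiv_segment {f : E → F} (hf : ContDiff ℝ 1 f) (p z : E) :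
    f z - f p = ∫ t in (0 : ℝ)..1, fderiv ℝ f (p + t • (z - p)) (z - p) := by
  have hγ (t : ℝ) : HasDerivAt (fun t : ℝ => p + t • (z - p)) (z - p) t := by
    simpa using ((hasDerivAt_id t).smul_const (z - p)).const_add p
  have hderiv (t : ℝ) : HasDerivAt (fun t : ℝ => f (p + t • (z - p)))
      (fderiv ℝ f (p + t • (z - p)) (z - p)) t :=
    ((hf.differentiable one_ne_zero _).hasFDerivAt).comp_hasDerivAt t (hγ t)
  have hcont : Continuous fun t : ℝ => fderiv ℝ f (p + t • (z - p)) (z - p) :=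
    ((hf.continuous_fderiv one_ne_zero).comp (by fun_prop)).clm_apply continuous_const
  rw [intervalIntegral.integral_eq_sub_of_hasDerivAt (fun t _ => hderiv t)
    (hcont.intervalIntegrable 0 1)]
  simp

theorem edist_le_lintegral_fderiv_segment_mul {f : E → F} (hf : ContDiff ℝ 1 f) (p z : E) :
    edist (f z) (f p) ≤ (∫⁻ t in Ioc (0 : ℝ) 1, ‖fderiv ℝ f (p + t • (z - p))‖ₑ) * edist z p := by
  rw [edist_eq_enorm_sub, edist_eq_enorm_sub, ← lintegral_mul_const' _ _ enorm_ne_top,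
    sub_eq_integral_fderiv_segment hf, intervalIntegral.integral_of_le zero_le_one]
  exact (enorm_integral_le_lintegral_enorm _).trans
    (lintegral_mono fun t => ContinuousLinearMap.le_opENorm _ _)

end Segment

theorem lintegral_comp_homothety {E : Type*} [NormedAddCommGroup E] [NormedSpace ℝ E]
    [MeasurableSpace E] [BorelSpace E] [FiniteDimensional ℝ E] (μ : Measure E)
    [μ.IsAddHaarMeasure] (g : E → ℝ≥0∞) (p : E) {t : ℝ} (ht : t ≠ 0) :
    ∫⁻ z, g (p + t • (z - p)) ∂μ = ENNReal.ofReal |(t ^ Module.finrank ℝ E)⁻¹| * ∫⁻ w, g w ∂μ := by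
  calc ∫⁻ z, g (p + t • (z - p)) ∂μ = ∫⁻ w, g (p + t • w) ∂μ := by
        simp_rw [sub_eq_add_neg]
        exact lintegral_add_right_eq_self (fun w => g (p + t • w)) (-p)
    _ = ∫⁻ w, g (p + w) ∂(μ.map (t • ·)) :=
        (lintegral_map_equiv (fun w => g (p + w)) (MeasurableEquiv.smul₀ t ht)).symm
    _ = _ := by
        rw [Measure.map_addHaar_smul μ ht, lintegral_smul_measure, smul_eq_mul,
          lintegral_add_left_eq_self]

theorem edist_mul_measure_le_setLIntegral {α β : Type*} [TopologicalSpace α] [MeasurableSpace α]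
    [OpensMeasurableSpace α] [PseudoEMetricSpace β] {μ : Measure α} {f : α → β}
    (hf : Continuous f) (s : Set α) (a b : β) :
    edist a b * μ s ≤ ∫⁻ z in s, edist (f z) a ∂μ + ∫⁻ z in s, edist (f z) b ∂μ := by
  rw [← setLIntegral_const, ← lintegral_add_left (hf.edist continuous_const).measurable]
  exact lintegral_mono fun z => edist_triangle_left a b (f z)

section MaximalFunction

variable {d : ℕ}

theorem setLIntegral_ball_le_maximalFn_mul (g : EuclideanSpace ℝ (Fin d) → ℝ≥0∞)
    (x : EuclideanSpace ℝ (Fin d)) {ρ : ℝ} (hρ : 0 < ρ) :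
    ∫⁻ w in ball x ρ, g w ≤ maximalFn g x * volume (ball x ρ) := by
  have htranslate : ∫⁻ w in ball x ρ, g w = ∫⁻ u in ball 0 ρ, g (x + u) := by
    rw [← (measurePreserving_add_left volume x).setLIntegral_comp_preimage_emb
      (measurableEmbedding_addLeft x), preimage_add_ball, sub_self]
  rw [htranslate, Measure.addHaar_ball_center,
    ← ENNReal.div_le_iff (measure_ball_pos _ _ hρ).ne' measure_ball_lt_top.ne]
  exact le_iSup₂ (f := fun r (_ : 0 < r) => (∫⁻ u in ball 0 r, g (x + u)) / volume (ball 0 r))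
    ρ hρ

theorem setLIntegral_ball_comp_homothety_le (g : EuclideanSpace ℝ (Fin d) → ℝ≥0∞)
    {p x : EuclideanSpace ℝ (Fin d)} {r s t : ℝ} (hs : 0 < s) (ht : 0 < t)
    (hball : ball x r ⊆ ball p s) :
    ∫⁻ z in ball x r, g (p + t • (z - p)) ≤ maximalFn g p * volume (ball p s) := by
  have hmaps : ∀ z ∈ ball x r, p + t • (z - p) ∈ ball p (t * s) := fun z hz => by
    rw [mem_ball_iff_norm, add_sub_cancel_left, norm_smul, Real.norm_of_nonneg ht.le]
    exact mul_lt_mul_of_pos_left (mem_ball_iff_norm.1 (hball hz)) ht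
  have hcancel : ENNReal.ofReal |(t ^ d)⁻¹| * ENNReal.ofReal (t ^ d) = 1 := by
    rw [abs_of_pos (by positivity), ← ENNReal.ofReal_mul (by positivity),
      inv_mul_cancel₀ (by positivity), ENNReal.ofReal_one]
  calc ∫⁻ z in ball x r, g (p + t • (z - p))
      = ∫⁻ z in ball x r, (ball p (t * s)).indicator g (p + t • (z - p)) :=
        setLIntegral_congr_fun measurableSet_ball fun z hz => (indicator_of_mem (hmaps z hz) g).symm
    _ ≤ ∫⁻ z, (ball p (t * s)).indicator g (p + t • (z - p)) := setLIntegral_le_lintegral _ _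
    _ = ENNReal.ofReal |(t ^ d)⁻¹| * ∫⁻ w in ball p (t * s), g w := by
        rw [lintegral_comp_homothety _ _ _ ht.ne', lintegral_indicator measurableSet_ball,
          finrank_euclideanSpace_fin]
    _ ≤ ENNReal.ofReal |(t ^ d)⁻¹| * (maximalFn g p * volume (ball p (t * s))) := by
        gcongr
        exact setLIntegral_ball_le_maximalFn_mul g p (by positivity)
    _ = maximalFn g p * volume (ball p s) := by
        rw [Measure.addHaar_ball_mul_of_pos _ _ ht, ← Measure.addHaar_ball_center _ p,
          finrank_euclideanSpace_fin, mul_left_comm,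
          ← mul_assoc _ _ (volume _), hcancel, one_mul]

theorem setLIntegral_ball_edist_le_maximalFn {F : Type*} [NormedAddCommGroup F]
    [NormedSpace ℝ F] [CompleteSpace F] {f : EuclideanSpace ℝ (Fin d) → F}
    (hf : ContDiff ℝ 1 f) {p x : EuclideanSpace ℝ (Fin d)} {r s : ℝ} (hs : 0 < s)
    (hball : ball x r ⊆ ball p s) :
    ∫⁻ z in ball x r, edist (f z) (f p) ≤
      ENNReal.ofReal s * maximalFn (fun z => ‖fderiv ℝ f z‖ₑ) p * volume (ball p s) := by
  set G := fun z => ‖fderiv ℝ f z‖ₑ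
  have hG : Continuous G := (hf.continuous_fderiv one_ne_zero).enorm
  have hpointwise : ∀ z ∈ ball x r,
      edist (f z) (f p) ≤ (∫⁻ t in Ioc (0 : ℝ) 1, G (p + t • (z - p))) * ENNReal.ofReal s :=
    fun z hz => (edist_le_lintegral_fderiv_segment_mul hf p z).trans <| by
      gcongr
      rw [edist_dist]
      exact ENNReal.ofReal_le_ofReal (mem_ball.1 (hball hz)).le
  have hswap : ∫⁻ z in ball x r, ∫⁻ t in Ioc (0 : ℝ) 1, G (p + t • (z - p)) =
      ∫⁻ t in Ioc (0 : ℝ) 1, ∫⁻ z in ball x r, G (p + t • (z - p)) :=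
    lintegral_lintegral_swap (hG.comp (by fun_prop)).measurable.aemeasurable
  calc ∫⁻ z in ball x r, edist (f z) (f p)
      ≤ ∫⁻ z in ball x r, (∫⁻ t in Ioc (0 : ℝ) 1, G (p + t • (z - p))) * ENNReal.ofReal s :=
        setLIntegral_mono' measurableSet_ball hpointwise
    _ = (∫⁻ t in Ioc (0 : ℝ) 1, ∫⁻ z in ball x r, G (p + t • (z - p))) * ENNReal.ofReal s := by
        rw [lintegral_mul_const' _ _ ENNReal.ofReal_ne_top, hswap]
    _ ≤ (∫⁻ _ in Ioc (0 : ℝ) 1, maximalFn G p * volume (ball p s)) * ENNReal.ofReal s := by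
        gcongr ?_ * _
        exact setLIntegral_mono' measurableSet_Ioc fun t ht =>
          setLIntegral_ball_comp_homothety_le G hs ht.1 hball
    _ = ENNReal.ofReal s * maximalFn G p * volume (ball p s) := by
        rw [setLIntegral_const, Real.volume_Ioc, sub_zero, ENNReal.ofReal_one, mul_one, mul_comm,
          mul_assoc]

end MaximalFunction

theorem stmt4_general (d : ℕ) :
    ∃ C : ℝ, 0 < C ∧ ∀ f : EuclideanSpace ℝ (Fin d) → ℝ, ContDiff ℝ 1 f →
      ∀ x y : EuclideanSpace ℝ (Fin d),
        ENNReal.ofReal |f x - f y| ≤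
          ENNReal.ofReal C *
            (maximalFn (fun z => (‖fderiv ℝ f z‖₊ : ℝ≥0∞)) x +
              maximalFn (fun z => (‖fderiv ℝ f z‖₊ : ℝ≥0∞)) y) * edist x y := by
  refine ⟨2 ^ (d + 1), by positivity, fun f hf x y => ?_⟩
  rcases eq_or_ne x y with rfl | hxy
  · simp
  set r := dist x y with hr_def
  have hr : 0 < r := dist_pos.2 hxy
  have h2r : 0 < 2 * r := by positivity
  have hvol (p : EuclideanSpace ℝ (Fin d)) :
      volume (ball p (2 * r)) = ENNReal.ofReal (2 ^ d) * volume (ball x r) := by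
    rw [Measure.addHaar_ball_mul_of_pos _ _ two_pos, Measure.addHaar_ball_center _ x,
      finrank_euclideanSpace_fin]
  have key := (edist_mul_measure_le_setLIntegral hf.continuous (ball x r) (f x) (f y)).trans
    (add_le_add
      (setLIntegral_ball_edist_le_maximalFn hf h2r (ball_subset_ball (by linarith)))
      (setLIntegral_ball_edist_le_maximalFn hf h2r (ball_subset_ball' (by linarith))))
  rw [← Real.dist_eq, ← edist_dist, edist_dist x y, ← hr_def,
    ← ENNReal.mul_le_mul_iff_left (measure_ball_pos volume x hr).ne' measure_ball_lt_top.ne]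
  simp only [enorm_eq_nnnorm] at key
  refine key.trans_eq ?_
  rw [hvol, hvol, pow_succ, ENNReal.ofReal_mul (by positivity : (0 : ℝ) ≤ 2 ^ d),
    ENNReal.ofReal_mul zero_le_two]
  ring

/-- There is a constant `C_d > 0` such that for every continuously differentiable
`f : ℝ^d → ℝ` and all `x, y`,
`|f(x) − f(y)| ≤ C_d (ℳ|∇f|(x) + ℳ|∇f|(y)) |x − y|`, the inequality being in `[0,∞]`. -/
theorem stmt4 (d : ℕ) (hd : 1 ≤ d) :
    ∃ C : ℝ, 0 < C ∧ ∀ f : EuclideanSpace ℝ (Fin d) → ℝ, ContDiff ℝ 1 f →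
      ∀ x y : EuclideanSpace ℝ (Fin d),
        ENNReal.ofReal |f x - f y| ≤
          ENNReal.ofReal C *
            (maximalFn (fun z => (‖fderiv ℝ f z‖₊ : ℝ≥0∞)) x +
              maximalFn (fun z => (‖fderiv ℝ f z‖₊ : ℝ≥0∞)) y) * edist x y :=
  stmt4_general d
end

section
/- Let d ≥ 1 and let ν be a Lévy measure on ℝ^d. Let f : ℝ^d → ℝ be twice continuously differentiable with f, ∇f, ∇²f bounded, and let g : ℝ^d → ℝ be twice continuously differentiable with compact support. Then the functions x ↦ ℒf(x)·g(x) and x ↦ f(x)·ℒ*g(x) are Lebesgue integrable on ℝ^d and ∫_{ℝ^d} ℒf(x) g(x) dx = ∫_{ℝ^d} f(x) ℒ*g(x) dx. -/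
open MeasureTheory Set
open scoped ENNReal

/-- A Lévy measure on `ℝ^d`: a Borel measure with `ν({0}) = 0` and
`∫ min(1,|y|²) ν(dy) < ∞`. -/
def IsLevyMeasure {d : ℕ} (ν : Measure (EuclideanSpace ℝ (Fin d))) : Prop :=
  ν {0} = 0 ∧ ∫⁻ y, ENNReal.ofReal (min 1 (‖y‖ ^ 2)) ∂ν < ⊤

/-- The nonlocal operator associated to a Lévy measure:
`ℒf(x) = ∫ (f(x+y) − f(x) − 1_{|y|≤1}(y)⟨y,∇f(x)⟩) ν(dy)`. -/
noncomputable def levyOp {d : ℕ} (ν : Measure (EuclideanSpace ℝ (Fin d)))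
    (f : EuclideanSpace ℝ (Fin d) → ℝ) (x : EuclideanSpace ℝ (Fin d)) : ℝ :=
  ∫ y, (f (x + y) - f x - if ‖y‖ ≤ 1 then fderiv ℝ f x y else 0) ∂ν

/-- The formal adjoint of the nonlocal operator:
`ℒ*g(x) = ∫ (g(x−y) − g(x) + 1_{|y|≤1}(y)⟨y,∇g(x)⟩) ν(dy)`. -/
noncomputable def levyOpStar {d : ℕ} (ν : Measure (EuclideanSpace ℝ (Fin d)))
    (g : EuclideanSpace ℝ (Fin d) → ℝ) (x : EuclideanSpace ℝ (Fin d)) : ℝ :=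
  ∫ y, (g (x - y) - g x + if ‖y‖ ≤ 1 then fderiv ℝ g x y else 0) ∂ν

/-!
For fixed `y`, the difference `f(x+y) − f(x)` is moved onto `g` by translation invariance of
Lebesgue measure and the gradient term by integration by parts, which gives the identity after
integrating in `x` first. To exchange the order of integration, both integrands are bounded in
`L¹(dx)` by `C · min(1, |y|²)`: by Taylor's formula when `|y| ≤ 1` and by boundedness of `f`
(resp. integrability of `g`) when `|y| > 1`. Fubini applies because `ν` is s-finite, having the
`ν`-integrable density `min(1, |y|²)` that vanishes only at `0`.
-/

open Function
open scoped Pointwise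

theorem sFinite_of_lintegral_lt_top {α : Type*} [MeasurableSpace α] {μ : Measure α}
    {F : α → ℝ≥0∞} (hF : Measurable F) (hint : ∫⁻ x, F x ∂μ < ∞) (h0 : ∀ᵐ x ∂μ, F x ≠ 0) :
    SFinite μ := by
  have : IsFiniteMeasure (μ.withDensity F) := isFiniteMeasure_withDensity hint.ne
  rw [← withDensity_inv_same hF h0 ((ae_lt_top hF hint.ne).mono fun _ hx => hx.ne)]
  infer_instance

section LevyMeasure

variable {d : ℕ} {ν : Measure (EuclideanSpace ℝ (Fin d))}

theorem IsLevyMeasure.integrable_min_one_sq (hν : IsLevyMeasure ν) :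
    Integrable (fun y => min 1 (‖y‖ ^ 2)) ν := by
  refine ⟨(continuous_const.min (continuous_norm.pow 2)).aestronglyMeasurable, ?_⟩
  rw [hasFiniteIntegral_iff_ofReal (ae_of_all _ fun y => by positivity)]
  exact hν.2

theorem IsLevyMeasure.sFinite (hν : IsLevyMeasure ν) : SFinite ν := by
  refine sFinite_of_lintegral_lt_top
    (continuous_const.min (continuous_norm.pow 2)).measurable.ennreal_ofReal hν.2 ?_
  filter_upwards [measure_eq_zero_iff_ae_notMem.1 hν.1] with y hy
  simpa [ENNReal.ofReal_eq_zero, not_le] using hy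

end LevyMeasure

section Taylor

variable {E F : Type*} [NormedAddCommGroup E] [NormedSpace ℝ E] [NormedAddCommGroup F]
  [NormedSpace ℝ F]

theorem norm_image_add_sub_sub_fderiv_le {f : E → F} (hf : ContDiff ℝ 2 f) {C : ℝ}
    (hC : ∀ x, ‖iteratedFDeriv ℝ 2 f x‖ ≤ C) (x y : E) :
    ‖f (x + y) - f x - fderiv ℝ f x y‖ ≤ C * ‖y‖ ^ 2 := by
  have hC0 : 0 ≤ C := (norm_nonneg _).trans (hC x)
  have hdf : Differentiable ℝ (fderiv ℝ f) :=
    (hf.fderiv_right (m := 1) le_rfl).differentiable one_ne_zero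
  have hD2 : ∀ z, ‖fderiv ℝ (fderiv ℝ f) z‖ ≤ C := fun z => by
    rw [← norm_iteratedFDeriv_one (𝕜 := ℝ), norm_iteratedFDeriv_fderiv]
    exact hC z
  have hlip : ∀ z ∈ Metric.closedBall x ‖y‖, ‖fderiv ℝ f z - fderiv ℝ f x‖ ≤ C * ‖y‖ :=
    fun z hz => calc
      ‖fderiv ℝ f z - fderiv ℝ f x‖ ≤ C * ‖z - x‖ :=
        convex_univ.norm_image_sub_le_of_norm_fderiv_le (fun w _ => hdf w) (fun w _ => hD2 w)
          (mem_univ x) (mem_univ z)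
      _ ≤ C * ‖y‖ := by gcongr; rwa [← dist_eq_norm]
  have := (convex_closedBall x ‖y‖).norm_image_sub_le_of_norm_fderiv_le'
    (fun z _ => (hf.differentiable two_ne_zero) z) hlip
    (Metric.mem_closedBall_self (norm_nonneg y))
    (show x + y ∈ Metric.closedBall x ‖y‖ by simp [Metric.mem_closedBall, dist_eq_norm])
  simpa [pow_two, mul_assoc] using this

end Taylor

section LevyKernel

variable {E : Type*} [NormedAddCommGroup E] [NormedSpace ℝ E]

-- The integrands of `levyOp` and `levyOpStar`: `levyOp ν f x = ∫ y, levyKernel f x y ∂ν` holds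
-- by `rfl`, and likewise for `levyOpStar`.
noncomputable def levyKernel (f : E → ℝ) (x y : E) : ℝ :=
  f (x + y) - f x - if ‖y‖ ≤ 1 then fderiv ℝ f x y else 0

noncomputable def levyKernelStar (g : E → ℝ) (x y : E) : ℝ :=
  g (x - y) - g x + if ‖y‖ ≤ 1 then fderiv ℝ g x y else 0

theorem abs_levyKernel_le {f : E → ℝ} (hf : ContDiff ℝ 2 f) {Mf M2 : ℝ}
    (hMf : ∀ x, |f x| ≤ Mf) (hM2 : ∀ x, ‖iteratedFDeriv ℝ 2 f x‖ ≤ M2) (x y : E) :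
    |levyKernel f x y| ≤ (2 * Mf + M2) * min 1 (‖y‖ ^ 2) := by
  have hMf0 : 0 ≤ Mf := (abs_nonneg _).trans (hMf x)
  have hM20 : 0 ≤ M2 := (norm_nonneg _).trans (hM2 x)
  rcases le_or_gt ‖y‖ 1 with hy | hy
  · rw [levyKernel, if_pos hy, min_eq_right (pow_le_one₀ (norm_nonneg y) hy)]
    calc _ ≤ M2 * ‖y‖ ^ 2 := norm_image_add_sub_sub_fderiv_le hf hM2 x y
      _ ≤ (2 * Mf + M2) * ‖y‖ ^ 2 := by gcongr; linarith
  · rw [levyKernel, if_neg hy.not_ge, min_eq_left (one_le_pow₀ hy.le), sub_zero, mul_one]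
    linarith [abs_sub (f (x + y)) (f x), hMf (x + y), hMf x]

theorem abs_levyKernelStar_le_of_norm_le {g : E → ℝ} (hg : ContDiff ℝ 2 g) {M2 : ℝ}
    (hM2 : ∀ x, ‖iteratedFDeriv ℝ 2 g x‖ ≤ M2) (x : E) {y : E} (hy : ‖y‖ ≤ 1) :
    |levyKernelStar g x y| ≤ M2 * ‖y‖ ^ 2 := by
  calc |levyKernelStar g x y| = ‖g (x + -y) - g x - fderiv ℝ g x (-y)‖ := by
        rw [levyKernelStar, if_pos hy, map_neg, sub_neg_eq_add, ← sub_eq_add_neg, Real.norm_eq_abs]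
    _ ≤ M2 * ‖-y‖ ^ 2 := norm_image_add_sub_sub_fderiv_le hg hM2 x (-y)
    _ = M2 * ‖y‖ ^ 2 := by rw [norm_neg]

theorem levyKernelStar_eq_zero_of_notMem {g : E → ℝ} {x y : E} (hy : ‖y‖ ≤ 1)
    (hx : x ∉ tsupport g + Metric.closedBall 0 1) : levyKernelStar g x y = 0 := by
  have hK : ∀ z ∈ Metric.closedBall (0 : E) 1, x - z ∉ tsupport g := fun z hz hxz =>
    hx (by simpa using add_mem_add hxz hz)
  have hx0 : x ∉ tsupport g := by simpa using hK 0 (Metric.mem_closedBall_self zero_le_one)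
  have hDg : fderiv ℝ g x = 0 :=
    image_eq_zero_of_notMem_tsupport fun h => hx0 (tsupport_fderiv_subset ℝ h)
  rw [levyKernelStar, image_eq_zero_of_notMem_tsupport hx0,
    image_eq_zero_of_notMem_tsupport (hK y (by simpa using hy)), hDg]
  simp

theorem abs_levyKernelStar_le_of_one_lt (g : E → ℝ) (x : E) {y : E} (hy : 1 < ‖y‖) :
    |levyKernelStar g x y| ≤ |g (x - y)| + |g x| := by
  rw [levyKernelStar, if_neg hy.not_ge, add_zero]
  exact abs_sub _ _

variable [MeasurableSpace E] [BorelSpace E] [SecondCountableTopology E]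

theorem measurable_levyKernel {f : E → ℝ} (hf : ContDiff ℝ 1 f) :
    Measurable (uncurry (levyKernel f)) :=
  ((hf.continuous.comp (continuous_fst.add continuous_snd)).sub
    (hf.continuous.comp continuous_fst)).measurable.sub
    (Measurable.ite (isClosed_le continuous_snd.norm continuous_const).measurableSet
      (hf.continuous_fderiv_apply one_ne_zero).measurable measurable_const)

theorem measurable_levyKernelStar {g : E → ℝ} (hg : ContDiff ℝ 1 g) :
    Measurable (uncurry (levyKernelStar g)) :=
  ((hg.continuous.comp (continuous_fst.sub continuous_snd)).sub
    (hg.continuous.comp continuous_fst)).measurable.add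
    (Measurable.ite (isClosed_le continuous_snd.norm continuous_const).measurableSet
      (hg.continuous_fderiv_apply one_ne_zero).measurable measurable_const)

end LevyKernel

section Integration

variable {E : Type*} [NormedAddCommGroup E] [MeasurableSpace E] [BorelSpace E] {μ : Measure E}

theorem integrable_mul_of_hasCompactSupport_right [IsFiniteMeasureOnCompacts μ] {u v : E → ℝ}
    (hu : Continuous u) (hv : Continuous v) (hvs : HasCompactSupport v) :
    Integrable (fun x => u x * v x) μ :=
  (hu.mul hv).integrable_of_hasCompactSupport hvs.mul_left

theorem integral_sub_mul_eq_integral_mul_sub [μ.IsAddRightInvariant]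
    [IsFiniteMeasureOnCompacts μ] {f g : E → ℝ} (hf : Continuous f) (hg : Continuous g)
    (hgs : HasCompactSupport g) (y : E) :
    ∫ x, (f (x + y) - f x) * g x ∂μ = ∫ x, f x * (g (x - y) - g x) ∂μ := by
  have htrans : ∫ x, f (x + y) * g x ∂μ = ∫ x, f x * g (x - y) ∂μ := by
    simpa using (integral_sub_right_eq_self (μ := μ) (fun x => f (x + y) * g x) y).symm
  have hint {u v : E → ℝ} :=
    integrable_mul_of_hasCompactSupport_right (μ := μ) (u := u) (v := v)
  have hfy : Continuous fun x => f (x + y) := hf.comp (continuous_add_const y)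
  have hgy : Continuous fun x => g (x - y) := hg.comp (continuous_sub_right y)
  simp only [sub_mul, mul_sub]
  rw [integral_sub (hint hfy hg hgs) (hint hf hg hgs), htrans,
    integral_sub (hint hf hgy (hgs.comp_homeomorph (Homeomorph.subRight y))) (hint hf hg hgs)]

variable [NormedSpace ℝ E]

theorem integral_levyKernel_mul_eq_integral_mul_levyKernelStar [FiniteDimensional ℝ E]
    [μ.IsAddHaarMeasure] {f g : E → ℝ}
    (hf : ContDiff ℝ 1 f) (hg : ContDiff ℝ 1 g) (hgs : HasCompactSupport g) (y : E) :
    ∫ x, levyKernel f x y * g x ∂μ = ∫ x, f x * levyKernelStar g x y ∂μ := by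
  have hint {u v : E → ℝ} :=
    integrable_mul_of_hasCompactSupport_right (μ := μ) (u := u) (v := v)
  have hDf : Continuous fun x => fderiv ℝ f x y :=
    (hf.continuous_fderiv_apply one_ne_zero).comp (continuous_id.prodMk continuous_const)
  have hDg : Continuous fun x => fderiv ℝ g x y :=
    (hg.continuous_fderiv_apply one_ne_zero).comp (continuous_id.prodMk continuous_const)
  have hgs' : HasCompactSupport fun x => g (x - y) - g x :=
    (hgs.comp_homeomorph (Homeomorph.subRight y)).sub hgs
  have htrans := integral_sub_mul_eq_integral_mul_sub (μ := μ) hf.continuous hg.continuous hgs y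
  simp only [levyKernel, levyKernelStar]
  split_ifs
  · have hibp : ∫ x, f x * fderiv ℝ g x y ∂μ = -∫ x, fderiv ℝ f x y * g x ∂μ :=
      integral_mul_fderiv_eq_neg_fderiv_mul_of_integrable (hint hDf hg.continuous hgs)
        (hint hf.continuous hDg (hgs.fderiv_apply ℝ y)) (hint hf.continuous hg.continuous hgs)
        (fun x _ => hf.differentiable one_ne_zero x) (fun x _ => hg.differentiable one_ne_zero x)
    calc ∫ x, (f (x + y) - f x - fderiv ℝ f x y) * g x ∂μ
        = ∫ x, (f (x + y) - f x) * g x ∂μ - ∫ x, fderiv ℝ f x y * g x ∂μ := by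
          rw [← integral_sub (hint (by fun_prop) hg.continuous hgs) (hint hDf hg.continuous hgs)]
          simp only [sub_mul]
      _ = ∫ x, f x * (g (x - y) - g x) ∂μ + ∫ x, f x * fderiv ℝ g x y ∂μ := by
          rw [htrans, hibp, sub_eq_add_neg]
      _ = ∫ x, f x * (g (x - y) - g x + fderiv ℝ g x y) ∂μ := by
          rw [← integral_add (hint hf.continuous (by fun_prop) hgs')
            (hint hf.continuous hDg (hgs.fderiv_apply ℝ y))]
          simp only [mul_add]
  · simpa using htrans

theorem integrable_levyKernelStar [IsFiniteMeasureOnCompacts μ] {g : E → ℝ} (hg : ContDiff ℝ 1 g)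
    (hgs : HasCompactSupport g) (y : E) : Integrable (fun x => levyKernelStar g x y) μ := by
  refine Continuous.integrable_of_hasCompactSupport ?_ ?_
  · have hDg : Continuous fun x => fderiv ℝ g x y :=
      (hg.continuous_fderiv_apply one_ne_zero).comp (continuous_id.prodMk continuous_const)
    unfold levyKernelStar
    split_ifs <;> fun_prop
  · refine ((hgs.comp_homeomorph (Homeomorph.subRight y)).sub hgs).add ?_
    split_ifs
    · exact hgs.fderiv_apply ℝ y
    · exact HasCompactSupport.zero

theorem integral_abs_levyKernelStar_le_of_norm_le [ProperSpace E] [IsFiniteMeasureOnCompacts μ]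
    {g : E → ℝ} (hg : ContDiff ℝ 2 g) (hgs : HasCompactSupport g) {M2 : ℝ}
    (hM2 : ∀ x, ‖iteratedFDeriv ℝ 2 g x‖ ≤ M2) {y : E} (hy : ‖y‖ ≤ 1) :
    ∫ x, |levyKernelStar g x y| ∂μ ≤
      μ.real (tsupport g + Metric.closedBall 0 1) * M2 * ‖y‖ ^ 2 := by
  set S := tsupport g + Metric.closedBall (0 : E) 1
  have hS : IsCompact S := hgs.isCompact.add (isCompact_closedBall 0 1)
  calc ∫ x, |levyKernelStar g x y| ∂μ ≤ ∫ x, S.indicator (fun _ => M2 * ‖y‖ ^ 2) x ∂μ := by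
        refine integral_mono (integrable_levyKernelStar (hg.of_le one_le_two) hgs y).abs
          ((integrable_indicator_iff hS.isClosed.measurableSet).2
            (integrableOn_const hS.measure_lt_top.ne)) fun x => ?_
        by_cases hx : x ∈ S
        · rw [indicator_of_mem hx]
          exact abs_levyKernelStar_le_of_norm_le hg hM2 x hy
        · rw [indicator_of_notMem hx, levyKernelStar_eq_zero_of_notMem hy hx, abs_zero]
    _ = μ.real S * M2 * ‖y‖ ^ 2 := by
        rw [integral_indicator_const _ hS.isClosed.measurableSet, smul_eq_mul, mul_assoc]

theorem integral_abs_levyKernelStar_le_of_one_lt [μ.IsAddRightInvariant] {g : E → ℝ}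
    (hg : Integrable g μ) {y : E} (hy : 1 < ‖y‖) :
    ∫ x, |levyKernelStar g x y| ∂μ ≤ 2 * ∫ x, |g x| ∂μ := by
  have hgy : Integrable (fun x => |g (x - y)|) μ := (hg.comp_sub_right y).abs
  calc ∫ x, |levyKernelStar g x y| ∂μ ≤ ∫ x, |g (x - y)| + |g x| ∂μ :=
        integral_mono_of_nonneg (ae_of_all _ fun _ => abs_nonneg _) (hgy.add hg.abs)
          (ae_of_all _ fun x => abs_levyKernelStar_le_of_one_lt g x hy)
    _ = 2 * ∫ x, |g x| ∂μ := by
        rw [integral_add hgy hg.abs, integral_sub_right_eq_self (fun x => |g x|) y, two_mul]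

theorem exists_integral_abs_levyKernelStar_le [FiniteDimensional ℝ E] [μ.IsAddHaarMeasure]
    {g : E → ℝ} (hg : ContDiff ℝ 2 g) (hgs : HasCompactSupport g) :
    ∃ C, ∀ y, ∫ x, |levyKernelStar g x y| ∂μ ≤ C * min 1 (‖y‖ ^ 2) := by
  obtain ⟨M2, hM2⟩ := (hg.continuous_iteratedFDeriv le_rfl).bounded_above_of_compact_support
    (hgs.iteratedFDeriv 2)
  have hM20 : 0 ≤ M2 := (norm_nonneg _).trans (hM2 0)
  set A := μ.real (tsupport g + Metric.closedBall 0 1) * M2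
  set B := 2 * ∫ x, |g x| ∂μ
  have hA : 0 ≤ A := by positivity
  have hB : 0 ≤ B := mul_nonneg zero_le_two (integral_nonneg fun _ => abs_nonneg _)
  refine ⟨A + B, fun y => ?_⟩
  rcases le_or_gt ‖y‖ 1 with hy | hy
  · rw [min_eq_right (pow_le_one₀ (norm_nonneg y) hy)]
    calc _ ≤ A * ‖y‖ ^ 2 := integral_abs_levyKernelStar_le_of_norm_le hg hgs hM2 hy
      _ ≤ (A + B) * ‖y‖ ^ 2 := by gcongr; linarith
  · rw [min_eq_left (one_le_pow₀ hy.le), mul_one]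
    linarith [integral_abs_levyKernelStar_le_of_one_lt (μ := μ)
      (hg.continuous.integrable_of_hasCompactSupport hgs) hy]

end Integration

section Product

variable {E : Type*} [NormedAddCommGroup E] [NormedSpace ℝ E] [MeasurableSpace E] [BorelSpace E]
  [SecondCountableTopology E] {μ ν : Measure E}

theorem integrable_levyKernel_mul_prod {f g : E → ℝ} (hf : ContDiff ℝ 2 f) {Mf M2 : ℝ}
    (hMf : ∀ x, |f x| ≤ Mf) (hM2 : ∀ x, ‖iteratedFDeriv ℝ 2 f x‖ ≤ M2) (hg : Integrable g μ)
    (hν : Integrable (fun y => min 1 (‖y‖ ^ 2)) ν) :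
    Integrable (uncurry fun x y => levyKernel f x y * g x) (μ.prod ν) := by
  refine ((hg.abs.mul_prod hν).const_mul (2 * Mf + M2)).mono'
    ((measurable_levyKernel (hf.of_le one_le_two)).aestronglyMeasurable.mul hg.1.comp_fst)
    (ae_of_all _ fun p => ?_)
  simp only [uncurry, Real.norm_eq_abs, abs_mul]
  calc |levyKernel f p.1 p.2| * |g p.1| ≤ (2 * Mf + M2) * min 1 (‖p.2‖ ^ 2) * |g p.1| := by
        gcongr
        exact abs_levyKernel_le hf hMf hM2 _ _
    _ = (2 * Mf + M2) * (|g p.1| * min 1 (‖p.2‖ ^ 2)) := by ring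

theorem integrable_mul_levyKernelStar_prod [FiniteDimensional ℝ E] [μ.IsAddHaarMeasure]
    [SFinite ν] {f g : E → ℝ} (hf : Continuous f) {Mf : ℝ} (hMf : ∀ x, |f x| ≤ Mf)
    (hg : ContDiff ℝ 2 g) (hgs : HasCompactSupport g)
    (hν : Integrable (fun y => min 1 (‖y‖ ^ 2)) ν) :
    Integrable (uncurry fun x y => f x * levyKernelStar g x y) (μ.prod ν) := by
  obtain ⟨C, hC⟩ := exists_integral_abs_levyKernelStar_le (μ := μ) hg hgs
  have hMf0 : 0 ≤ Mf := (abs_nonneg _).trans (hMf 0)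
  have hK := integrable_levyKernelStar (μ := μ) (hg.of_le one_le_two) hgs
  have hmeas : StronglyMeasurable (uncurry fun x y => f x * levyKernelStar g x y) :=
    ((hf.measurable.comp measurable_fst).mul
      (measurable_levyKernelStar (hg.of_le one_le_two))).stronglyMeasurable
  have hsec : ∀ y, Integrable (fun x => f x * levyKernelStar g x y) μ := fun y =>
    (hK y).bdd_mul hf.aestronglyMeasurable (ae_of_all _ hMf)
  rw [integrable_prod_iff' hmeas.aestronglyMeasurable]
  refine ⟨ae_of_all _ hsec, (hν.const_mul (Mf * C)).mono'
    hmeas.norm.integral_prod_left'.aestronglyMeasurable (ae_of_all _ fun y => ?_)⟩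
  rw [Real.norm_of_nonneg (integral_nonneg fun _ => norm_nonneg _)]
  calc ∫ x, ‖f x * levyKernelStar g x y‖ ∂μ ≤ ∫ x, Mf * |levyKernelStar g x y| ∂μ :=
        integral_mono (hsec y).norm ((hK y).abs.const_mul Mf) fun x => by
          rw [Real.norm_eq_abs, abs_mul]
          exact mul_le_mul_of_nonneg_right (hMf x) (abs_nonneg _)
    _ = Mf * ∫ x, |levyKernelStar g x y| ∂μ := integral_const_mul _ _
    _ ≤ Mf * (C * min 1 (‖y‖ ^ 2)) := by gcongr; exact hC y
    _ = Mf * C * min 1 (‖y‖ ^ 2) := by ring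

end Product

theorem stmt9_general (d : ℕ) (ν : Measure (EuclideanSpace ℝ (Fin d)))
    (hν : IsLevyMeasure ν)
    (f : EuclideanSpace ℝ (Fin d) → ℝ) (hf : ContDiff ℝ 2 f)
    (Mf M2 : ℝ)
    (hMf : ∀ x, |f x| ≤ Mf)
    (hM2 : ∀ x, ‖iteratedFDeriv ℝ 2 f x‖ ≤ M2)
    (g : EuclideanSpace ℝ (Fin d) → ℝ) (hg : ContDiff ℝ 2 g)
    (hgsupp : HasCompactSupport g) :
    Integrable (fun x => levyOp ν f x * g x) volume ∧
    Integrable (fun x => f x * levyOpStar ν g x) volume ∧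
    ∫ x, levyOp ν f x * g x = ∫ x, f x * levyOpStar ν g x := by
  have := hν.sFinite
  have hL := integrable_levyKernel_mul_prod hf hMf hM2
    (hg.continuous.integrable_of_hasCompactSupport (μ := volume) hgsupp) hν.integrable_min_one_sq
  have hR := integrable_mul_levyKernelStar_prod (μ := volume) hf.continuous hMf hg hgsupp
    hν.integrable_min_one_sq
  have hLx : ∀ x, ∫ y, levyKernel f x y * g x ∂ν = levyOp ν f x * g x := fun x =>
    integral_mul_const _ _
  have hRx : ∀ x, ∫ y, f x * levyKernelStar g x y ∂ν = f x * levyOpStar ν g x := fun x =>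
    integral_const_mul _ _
  refine ⟨hL.integral_prod_left.congr (ae_of_all _ hLx),
    hR.integral_prod_left.congr (ae_of_all _ hRx), ?_⟩
  calc ∫ x, levyOp ν f x * g x = ∫ x, ∫ y, levyKernel f x y * g x ∂ν := by simp_rw [hLx]
    _ = ∫ y, (∫ x, levyKernel f x y * g x) ∂ν := integral_integral_swap hL
    _ = ∫ y, (∫ x, f x * levyKernelStar g x y) ∂ν := by
        simp_rw [integral_levyKernel_mul_eq_integral_mul_levyKernelStar (hf.of_le one_le_two)
          (hg.of_le one_le_two) hgsupp]
    _ = ∫ x, ∫ y, f x * levyKernelStar g x y ∂ν := (integral_integral_swap hR).symm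
    _ = ∫ x, f x * levyOpStar ν g x := by simp_rw [hRx]

/-- Integration by parts for the nonlocal operator: for `f ∈ C²_b` and `g ∈ C²` with
compact support, `x ↦ ℒf(x)g(x)` and `x ↦ f(x)ℒ*g(x)` are Lebesgue integrable and
`∫ ℒf · g = ∫ f · ℒ*g`. -/
theorem stmt9 (d : ℕ) (hd : 1 ≤ d) (ν : Measure (EuclideanSpace ℝ (Fin d)))
    (hν : IsLevyMeasure ν)
    (f : EuclideanSpace ℝ (Fin d) → ℝ) (hf : ContDiff ℝ 2 f)
    (Mf M1 M2 : ℝ)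
    (hMf : ∀ x, |f x| ≤ Mf) (hM1 : ∀ x, ‖fderiv ℝ f x‖ ≤ M1)
    (hM2 : ∀ x, ‖iteratedFDeriv ℝ 2 f x‖ ≤ M2)
    (g : EuclideanSpace ℝ (Fin d) → ℝ) (hg : ContDiff ℝ 2 g)
    (hgsupp : HasCompactSupport g) :
    Integrable (fun x => levyOp ν f x * g x) volume ∧
    Integrable (fun x => f x * levyOpStar ν g x) volume ∧
    ∫ x, levyOp ν f x * g x = ∫ x, f x * levyOpStar ν g x :=
  stmt9_general d ν hν f hf Mf M2 hMf hM2 g hg hgsupp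
end
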